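/- Let μ be a submodular capacity and p ≥ 1. For a random function F : [0,1]² × Ω → ℝ and the bivariate random Bernstein polynomial B_{n₁,n₂}(F)(x₁,x₂,ω) = Σ_{k₁=0}^{n₁} Σ_{k₂=0}^{n₂} p_{k₁,n₁}(x₁) p_{k₂,n₂}(x₂) F(k₁/n₁, k₂/n₂, ω), one has the pointwise estimate (C)∫_Ω |F(x₁,x₂,ω) − B_{n₁,n₂}(F)(x₁,x₂,ω)|^p dμ ≤ Σ_{k₁,k₂} p_{k₁,n₁}(x₁) p_{k₂,n₂}(x₂) (C)∫_Ω |F(x₁,x₂,ω) − F(k₁/n₁,k₂/n₂,ω)|^p dμ. -/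

import Mathlib

open MeasureTheory ENNReal

/-- The Choquet integral of a nonnegative function `f` on a set `A` with respect
to a capacity `μ`. -/
noncomputable def choquet {Ω : Type*} (μ : Set Ω → ℝ) (f : Ω → ℝ) (A : Set Ω) : ℝ≥0∞ :=
  ∫⁻ t in Set.Ioi (0:ℝ), ENNReal.ofReal (μ ({ω | t < f ω} ∩ A))

/-- Bernstein basis polynomial `p_{k,n}(x) = C(n,k) x^k (1-x)^{n-k}`. -/
noncomputable def bern (n k : ℕ) (x : ℝ) : ℝ := (n.choose k : ℝ) * x ^ k * (1 - x) ^ (n - k)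

/-! Pointwise, `|F(x) - B F(x)|^p ≤ ∑ₖ pₖ |F(x) - F(k/n)|^p` by Jensen's inequality, the Bernstein
weights being nonnegative with sum one. The Choquet integral is monotone, positively homogeneous
and, for a submodular capacity, subadditive on nonnegative functions, which gives the estimate.

Subadditivity is the real work. Submodularity on level sets gives
`(C)∫(f + ε 1_A) ≤ (C)∫f + ε μ(A)`. A bounded `g` lies below the staircase `ε + ∑ₖ ε 1_{g > kε}`,
whose contributions `ε μ(g > kε)` are lower Riemann sums for `(C)∫g`; letting `ε → 0` handles
bounded `g`, and truncating `g` at level `n` with monotone convergence handles the rest. -/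

open Set Filter Topology

theorem le_add_sum_ite_lt {ε : ℝ} (hε : 0 ≤ ε) (N : ℕ) {x : ℝ} (hx : x ≤ N * ε) :
    x ≤ ε + ∑ k ∈ Finset.range N, if (k + 1) * ε < x then ε else 0 := by
  induction N generalizing x with
  | zero =>
    rw [Nat.cast_zero, zero_mul] at hx
    simpa using hx.trans hε
  | succ N ih =>
    rcases le_or_gt x ε with hxε | hxε
    · have hsum : 0 ≤ ∑ k ∈ Finset.range (N + 1), if (k + 1) * ε < x then ε else 0 :=
        Finset.sum_nonneg fun _ _ => by split_ifs <;> simp [hε]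
      linarith
    · have h := ih (x := x - ε) (by push_cast at hx; linarith)
      have hshift : ∀ k : ℕ, ((k + 1 : ℝ) * ε < x - ε) ↔ (((k + 1 : ℕ) : ℝ) + 1) * ε < x := by
        intro k; push_cast; constructor <;> intro <;> linarith
      simp only [hshift] at h
      rw [Finset.sum_range_succ']
      simp only [Nat.cast_zero, zero_add, one_mul, hxε, if_true]
      linarith

theorem sum_mul_le_setLIntegral_Ioi_of_antitone {a : ℝ → ℝ≥0∞} (ha : Antitone a) {δ : ℝ}
    (hδ : 0 ≤ δ) (N : ℕ) :
    ∑ k ∈ Finset.range N, ENNReal.ofReal δ * a ((k + 1) * δ) ≤ ∫⁻ t in Ioi 0, a t := by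
  suffices h : ∑ k ∈ Finset.range N, ENNReal.ofReal δ * a ((k + 1) * δ) ≤
      ∫⁻ t in Ioc 0 (N * δ), a t from h.trans (lintegral_mono_set Ioc_subset_Ioi_self)
  induction N with
  | zero => simp
  | succ N ih =>
    have hstep : ENNReal.ofReal δ * a ((N + 1) * δ) ≤ ∫⁻ t in Ioc (N * δ) ((N + 1) * δ), a t :=
      calc ENNReal.ofReal δ * a ((N + 1) * δ)
          = ∫⁻ _ in Ioc (N * δ) ((N + 1) * δ), a ((N + 1) * δ) := by
            rw [setLIntegral_const, Real.volume_Ioc, mul_comm]; ring_nf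
        _ ≤ ∫⁻ t in Ioc (N * δ) ((N + 1) * δ), a t :=
            setLIntegral_mono ha.measurable fun t ht => ha ht.2
    rw [Finset.sum_range_succ, Nat.cast_succ,
      ← Ioc_union_Ioc_eq_Ioc (b := N * δ) (by positivity) (by nlinarith), lintegral_union measurableSet_Ioc (Ioc_disjoint_Ioc_of_le le_rfl)]
    exact add_le_add ih hstep

theorem le_of_forall_pos_le_add_ofReal_mul {a b c : ℝ≥0∞} (hc : c ≠ ⊤)
    (h : ∀ δ : ℝ, 0 < δ → a ≤ b + ENNReal.ofReal δ * c) : a ≤ b := by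
  have hlim : Tendsto (fun δ : ℝ => b + ENNReal.ofReal δ * c) (𝓝[>] 0) (𝓝 b) := by
    have h0 : Tendsto ENNReal.ofReal (𝓝[>] 0) (𝓝 0) := by
      simpa using (ENNReal.continuous_ofReal.tendsto 0).mono_left nhdsWithin_le_nhds
    simpa using tendsto_const_nhds.add (ENNReal.Tendsto.mul_const h0 (Or.inr hc))
  exact ge_of_tendsto hlim (eventually_nhdsWithin_of_forall h)

section Choquet

variable {Ω : Type*} {μ : Set Ω → ℝ}

def IsSubmodular (μ : Set Ω → ℝ) : Prop :=
  ∀ A B : Set Ω, μ (A ∪ B) + μ (A ∩ B) ≤ μ A + μ B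

theorem antitone_ofReal_levelSet_inter (hμ : Monotone μ) (f : Ω → ℝ) (A : Set Ω) :
    Antitone fun t : ℝ => ENNReal.ofReal (μ ({ω | t < f ω} ∩ A)) :=
  fun _ _ hst => ENNReal.ofReal_le_ofReal <| hμ <|
    inter_subset_inter_left _ fun _ hω => hst.trans_lt hω

theorem choquet_mono (hμ : Monotone μ) {f g : Ω → ℝ} (hfg : ∀ ω, f ω ≤ g ω) (A : Set Ω) :
    choquet μ f A ≤ choquet μ g A :=
  lintegral_mono fun _ => ENNReal.ofReal_le_ofReal <| hμ <|
    inter_subset_inter_left _ fun ω hω => hω.trans_le (hfg ω)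

theorem choquet_mono_set (hμ : Monotone μ) (f : Ω → ℝ) {A B : Set Ω} (hAB : A ⊆ B) :
    choquet μ f A ≤ choquet μ f B :=
  lintegral_mono fun _ => ENNReal.ofReal_le_ofReal <| hμ <| inter_subset_inter_right _ hAB

theorem choquet_zero (h0 : μ ∅ = 0) (A : Set Ω) : choquet μ (fun _ => 0) A = 0 := by
  rw [choquet, setLIntegral_congr_fun (g := fun _ => 0) measurableSet_Ioi fun t (ht : 0 < t) => by
    simp [not_lt.2 ht.le, h0], lintegral_zero]

theorem choquet_const_mul {c : ℝ} (hc : 0 < c) (f : Ω → ℝ) (A : Set Ω) :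
    choquet μ (fun ω => c * f ω) A = ENNReal.ofReal c * choquet μ f A := by
  set a : ℝ → ℝ≥0∞ := fun t => ENNReal.ofReal (μ ({ω | t < f ω} ∩ A))
  have hlevel : ∀ t, {ω | t < c * f ω} = {ω | c⁻¹ * t < f ω} := fun t => by
    ext ω; simp only [mem_ofPred_eq, ← div_eq_inv_mul, div_lt_iff₀' hc]
  calc choquet μ (fun ω => c * f ω) A
      = ∫⁻ t in (c⁻¹ * ·) ⁻¹' Ioi 0, a (c⁻¹ * t) := by
        rw [preimage_const_mul_Ioi₀ _ (inv_pos.2 hc), zero_div]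
        simp only [choquet, a, hlevel]
    _ = ∫⁻ t in Ioi 0, a t ∂(Measure.map (c⁻¹ * ·) volume) := by
        have hE := measurableEmbedding_mulLeft₀ (inv_ne_zero hc.ne')
        rw [hE.restrict_map, hE.lintegral_map]
    _ = ENNReal.ofReal c * choquet μ f A := by
        rw [Real.map_volume_mul_left (inv_ne_zero hc.ne'), inv_inv, abs_of_pos hc,
          Measure.restrict_smul, lintegral_smul_measure, smul_eq_mul]
        rfl

theorem choquet_const_mul_le (h0 : μ ∅ = 0) {c : ℝ} (hc : 0 ≤ c) (f : Ω → ℝ) (A : Set Ω) :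
    choquet μ (fun ω => c * f ω) A ≤ ENNReal.ofReal c * choquet μ f A := by
  rcases hc.eq_or_lt with rfl | hc
  · simp only [zero_mul, choquet_zero h0, zero_le]
  · exact (choquet_const_mul hc f A).le

theorem choquet_add_const_le (hμ : Monotone μ) (f : Ω → ℝ) (A : Set Ω) {c : ℝ} (hc : 0 ≤ c) :
    choquet μ (fun ω => f ω + c) A ≤
      choquet μ f A + ENNReal.ofReal c * ENNReal.ofReal (μ A) := by
  set a : ℝ → ℝ≥0∞ := fun t => ENNReal.ofReal (μ ({ω | t < f ω} ∩ A))
  have hshift : choquet μ (fun ω => f ω + c) A = ∫⁻ t in Ioi (-c), a t := by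
    rw [← (measurePreserving_sub_right volume c).setLIntegral_comp_preimage_emb
      (measurableEmbedding_subRight c), preimage_sub_const_Ioi, neg_add_cancel]
    simp only [choquet, a, sub_lt_iff_lt_add]
  have hsplit : ∫⁻ t in Ioi (-c), a t = (∫⁻ t in Ioc (-c) 0, a t) + choquet μ f A := by
    rw [← Ioc_union_Ioi_eq_Ioi (neg_nonpos.2 hc),
      lintegral_union measurableSet_Ioi Ioc_disjoint_Ioi_same]
    rfl
  have hbound : ∫⁻ t in Ioc (-c) 0, a t ≤ ENNReal.ofReal c * ENNReal.ofReal (μ A) :=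
    calc ∫⁻ t in Ioc (-c) 0, a t ≤ ∫⁻ _ in Ioc (-c) 0, ENNReal.ofReal (μ A) :=
          lintegral_mono fun _ => ENNReal.ofReal_le_ofReal (hμ inter_subset_right)
      _ = ENNReal.ofReal c * ENNReal.ofReal (μ A) := by
          rw [setLIntegral_const, Real.volume_Ioc, sub_neg_eq_add, zero_add, mul_comm]
  rw [hshift, hsplit, add_comm]
  gcongr

theorem choquet_add_indicator_le (h0 : μ ∅ = 0) (hμ : Monotone μ)
    (hsub : IsSubmodular μ)
    (f : Ω → ℝ) (A : Set Ω) {ε : ℝ} (hε : 0 ≤ ε) :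
    choquet μ (fun ω => f ω + A.indicator (fun _ => ε) ω) univ ≤
      choquet μ f univ + ENNReal.ofReal ε * ENNReal.ofReal (μ A) := by
  have hnn : ∀ B, 0 ≤ μ B := fun B => h0 ▸ hμ (empty_subset B)
  have hpt : ∀ t : ℝ,
      ENNReal.ofReal (μ ({ω | t < f ω + A.indicator (fun _ => ε) ω} ∩ univ)) +
          ENNReal.ofReal (μ ({ω | t < f ω} ∩ A)) ≤
        ENNReal.ofReal (μ ({ω | t < f ω} ∩ univ)) +
          ENNReal.ofReal (μ ({ω | t < f ω + ε} ∩ A)) := by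
    intro t
    set X := {ω | t < f ω}
    set Y := {ω | t < f ω + ε} ∩ A
    have hunion : {ω | t < f ω + A.indicator (fun _ => ε) ω} ∩ univ = X ∪ Y := by
      ext ω
      by_cases hω : ω ∈ A <;> simp [X, Y, hω]
      exact fun h => h.trans_le (le_add_of_nonneg_right hε)
    have hinter : X ∩ Y = X ∩ A := by
      ext ω
      simp only [X, Y, mem_inter_iff, mem_ofPred_eq]
      exact ⟨fun h => ⟨h.1, h.2.2⟩, fun h => ⟨h.1, h.1.trans_le (le_add_of_nonneg_right hε), h.2⟩⟩
    rw [hunion, inter_univ, ← ENNReal.ofReal_add (hnn _) (hnn _),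
      ← ENNReal.ofReal_add (hnn _) (hnn _), ← hinter]
    exact ENNReal.ofReal_le_ofReal (hsub X Y)
  have hint : choquet μ (fun ω => f ω + A.indicator (fun _ => ε) ω) univ + choquet μ f A ≤
      choquet μ f univ + choquet μ (fun ω => f ω + ε) A := by
    simp only [choquet]
    rw [← lintegral_add_left ((antitone_ofReal_levelSet_inter hμ _ _).measurable),
      ← lintegral_add_left ((antitone_ofReal_levelSet_inter hμ _ _).measurable)]
    exact lintegral_mono hpt
  by_cases htop : choquet μ f A = ⊤
  · simp [top_unique (htop ▸ choquet_mono_set hμ f (subset_univ A))]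
  refine ENNReal.le_of_add_le_add_right htop (hint.trans ?_)
  rw [add_assoc, add_comm (ENNReal.ofReal ε * _)]
  gcongr
  exact choquet_add_const_le hμ f A hε

theorem choquet_add_sum_indicator_le (h0 : μ ∅ = 0) (hμ : Monotone μ)
    (hsub : IsSubmodular μ)
    {ι : Type*} (s : Finset ι) (A : ι → Set Ω) (f : Ω → ℝ) {ε : ℝ} (hε : 0 ≤ ε) :
    choquet μ (fun ω => f ω + ∑ i ∈ s, (A i).indicator (fun _ => ε) ω) univ ≤
      choquet μ f univ + ∑ i ∈ s, ENNReal.ofReal ε * ENNReal.ofReal (μ (A i)) := by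
  induction s using Finset.cons_induction with
  | empty => simp
  | cons j s hj ih =>
    calc choquet μ (fun ω => f ω + ∑ i ∈ s.cons j hj, (A i).indicator (fun _ => ε) ω) univ
        = choquet μ (fun ω => (f ω + ∑ i ∈ s, (A i).indicator (fun _ => ε) ω) +
            (A j).indicator (fun _ => ε) ω) univ := by
          simp only [Finset.sum_cons, add_comm, add_left_comm]
      _ ≤ choquet μ (fun ω => f ω + ∑ i ∈ s, (A i).indicator (fun _ => ε) ω) univ +
            ENNReal.ofReal ε * ENNReal.ofReal (μ (A j)) :=
          choquet_add_indicator_le h0 hμ hsub _ _ hε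
      _ ≤ choquet μ f univ + ∑ i ∈ s.cons j hj, ENNReal.ofReal ε * ENNReal.ofReal (μ (A i)) := by
          grw [ih, Finset.sum_cons, add_right_comm, add_assoc]

theorem choquet_add_le_of_le_const (h0 : μ ∅ = 0) (hμ : Monotone μ)
    (hsub : IsSubmodular μ)
    (f g : Ω → ℝ) {B : ℝ} (hgB : ∀ ω, g ω ≤ B) :
    choquet μ (fun ω => f ω + g ω) univ ≤ choquet μ f univ + choquet μ g univ := by
  refine le_of_forall_pos_le_add_ofReal_mul (ENNReal.ofReal_ne_top (r := μ univ)) fun δ hδ => ?_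
  obtain ⟨N, hN⟩ := exists_nat_ge (B / δ)
  set L : ℕ → Set Ω := fun k => {ω | (k + 1) * δ < g ω}
  have hsteps : ∀ ω, f ω + g ω ≤
      (f ω + ∑ k ∈ Finset.range N, (L k).indicator (fun _ => δ) ω) + δ := by
    intro ω
    have hstair := le_add_sum_ite_lt hδ.le N ((hgB ω).trans ((div_le_iff₀ hδ).1 hN))
    simp only [indicator_apply, L, mem_ofPred_eq]
    linarith
  have hriemann : ∑ k ∈ Finset.range N, ENNReal.ofReal δ * ENNReal.ofReal (μ (L k)) ≤
      choquet μ g univ := by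
    simpa only [choquet, L, inter_univ] using sum_mul_le_setLIntegral_Ioi_of_antitone
      (antitone_ofReal_levelSet_inter hμ g univ) hδ.le N
  calc choquet μ (fun ω => f ω + g ω) univ
      ≤ choquet μ (fun ω => (f ω + ∑ k ∈ Finset.range N, (L k).indicator (fun _ => δ) ω) + δ)
          univ := choquet_mono hμ hsteps univ
    _ ≤ choquet μ (fun ω => f ω + ∑ k ∈ Finset.range N, (L k).indicator (fun _ => δ) ω) univ +
          ENNReal.ofReal δ * ENNReal.ofReal (μ univ) := choquet_add_const_le hμ _ univ hδ.le
    _ ≤ choquet μ f univ + choquet μ g univ + ENNReal.ofReal δ * ENNReal.ofReal (μ univ) := by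
          grw [choquet_add_sum_indicator_le h0 hμ hsub _ _ _ hδ.le, hriemann]

theorem choquet_add_le (h0 : μ ∅ = 0) (hμ : Monotone μ)
    (hsub : IsSubmodular μ)
    {f : Ω → ℝ} (hf : ∀ ω, 0 ≤ f ω) (g : Ω → ℝ) :
    choquet μ (fun ω => f ω + g ω) univ ≤ choquet μ f univ + choquet μ g univ := by
  set a : ℕ → ℝ → ℝ≥0∞ := fun n t => ENNReal.ofReal (μ ({ω | t < f ω + min (g ω) n} ∩ univ))
  have ha : Monotone a := fun m n hmn t => ENNReal.ofReal_le_ofReal <| hμ <|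
    inter_subset_inter_left _ fun ω (hω : t < _) => hω.trans_le <| by gcongr
  have hsup : ∀ t, ⨆ n, a n t = ENNReal.ofReal (μ ({ω | t < f ω + g ω} ∩ univ)) := by
    intro t
    refine le_antisymm (iSup_le fun n => ENNReal.ofReal_le_ofReal <| hμ <|
      inter_subset_inter_left _ fun ω (hω : t < _) => show t < _ from hω.trans_le ?_)
      (le_iSup_of_le (⌊t⌋₊ + 1) ?_)
    · gcongr; exact min_le_left _ _
    · -- below level `⌊t⌋₊ + 1 > t` the truncation of `g` is invisible, as `f ≥ 0`
      refine ENNReal.ofReal_le_ofReal <| hμ <| inter_subset_inter_left _ fun ω (hω : t < _) => ?_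
      have ht := Nat.lt_floor_add_one t
      show t < f ω + min (g ω) _
      rcases min_cases (g ω) ((⌊t⌋₊ + 1 : ℕ) : ℝ) with ⟨h, -⟩ | ⟨h, -⟩ <;> rw [h]
      · exact hω
      · push_cast; linarith [hf ω]
  calc choquet μ (fun ω => f ω + g ω) univ = ∫⁻ t in Ioi 0, ⨆ n, a n t := by
        simp only [choquet, hsup]
    _ = ⨆ n : ℕ, choquet μ (fun ω => f ω + min (g ω) n) univ :=
        lintegral_iSup (fun n => (antitone_ofReal_levelSet_inter hμ _ _).measurable) ha
    _ ≤ choquet μ f univ + choquet μ g univ := iSup_le fun n =>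
        (choquet_add_le_of_le_const h0 hμ hsub f _ fun ω => min_le_right _ _).trans <| by
          grw [choquet_mono hμ (fun ω => min_le_left (g ω) n) univ]

theorem choquet_sum_mul_le (h0 : μ ∅ = 0) (hμ : Monotone μ)
    (hsub : IsSubmodular μ)
    {ι : Type*} (s : Finset ι) {w : ι → ℝ} {u : ι → Ω → ℝ}
    (hw : ∀ i ∈ s, 0 ≤ w i) (hu : ∀ i ∈ s, ∀ ω, 0 ≤ u i ω) :
    choquet μ (fun ω => ∑ i ∈ s, w i * u i ω) univ ≤
      ∑ i ∈ s, ENNReal.ofReal (w i) * choquet μ (u i) univ := by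
  induction s using Finset.cons_induction with
  | empty => simp [choquet_zero h0]
  | cons j s hj ih =>
    rw [Finset.forall_mem_cons] at hw hu
    simp only [Finset.sum_cons]
    calc choquet μ (fun ω => w j * u j ω + ∑ i ∈ s, w i * u i ω) univ
        ≤ choquet μ (fun ω => w j * u j ω) univ + choquet μ (fun ω => ∑ i ∈ s, w i * u i ω) univ :=
          choquet_add_le h0 hμ hsub (fun ω => mul_nonneg hw.1 (hu.1 ω)) _
      _ ≤ _ := add_le_add (choquet_const_mul_le h0 hw.1 _ _) (ih hw.2 hu.2)

end Choquet

theorem abs_sub_sum_mul_rpow_le {ι : Type*} (s : Finset ι) {w : ι → ℝ}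
    (hw : ∀ i ∈ s, 0 ≤ w i) (hw1 : ∑ i ∈ s, w i = 1) (a : ℝ) (b : ι → ℝ) {p : ℝ} (hp : 1 ≤ p) :
    |a - ∑ i ∈ s, w i * b i| ^ p ≤ ∑ i ∈ s, w i * |a - b i| ^ p := by
  have hmean : a - ∑ i ∈ s, w i * b i = ∑ i ∈ s, w i * (a - b i) := by
    simp only [mul_sub, Finset.sum_sub_distrib, ← Finset.sum_mul, hw1, one_mul]
  calc |a - ∑ i ∈ s, w i * b i| ^ p ≤ (∑ i ∈ s, w i * |a - b i|) ^ p := by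
        rw [hmean]
        refine Real.rpow_le_rpow (abs_nonneg _) ((Finset.abs_sum_le_sum_abs _ _).trans_eq ?_)
          (by linarith)
        exact Finset.sum_congr rfl fun i hi => by rw [abs_mul, abs_of_nonneg (hw i hi)]
    _ ≤ ∑ i ∈ s, w i * |a - b i| ^ p :=
        Real.rpow_arith_mean_le_arith_mean_rpow s w _ hw hw1 (fun _ _ => abs_nonneg _) hp

theorem bern_nonneg (n k : ℕ) {x : ℝ} (hx : x ∈ Icc (0 : ℝ) 1) : 0 ≤ bern n k x :=
  mul_nonneg (mul_nonneg (Nat.cast_nonneg _) (pow_nonneg hx.1 _)) (pow_nonneg (sub_nonneg.2 hx.2) _)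

theorem sum_bern_eq_one (n : ℕ) (x : ℝ) : ∑ k ∈ Finset.range (n + 1), bern n k x = 1 := by
  simpa [bern, mul_comm, mul_left_comm, mul_assoc] using (add_pow x (1 - x) n).symm

theorem choquet_bernstein_pointwise_estimate_general
    {Ω : Type*} (μ : Set Ω → ℝ)
    (h0 : μ ∅ = 0)
    (hmono : ∀ A B : Set Ω, A ⊆ B → μ A ≤ μ B)
    (hsubmod : ∀ A B : Set Ω, μ (A ∪ B) + μ (A ∩ B) ≤ μ A + μ B)
    (p : ℝ) (hp : 1 ≤ p) (F : ℝ → ℝ → Ω → ℝ)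
    (n₁ n₂ : ℕ)
    (x₁ x₂ : ℝ) (hx₁ : x₁ ∈ Set.Icc (0:ℝ) 1) (hx₂ : x₂ ∈ Set.Icc (0:ℝ) 1) :
    choquet μ (fun ω => |F x₁ x₂ ω -
        ∑ k₁ ∈ Finset.range (n₁+1), ∑ k₂ ∈ Finset.range (n₂+1),
          bern n₁ k₁ x₁ * bern n₂ k₂ x₂ * F ((k₁:ℝ)/n₁) ((k₂:ℝ)/n₂) ω| ^ p) Set.univ
      ≤ ∑ k₁ ∈ Finset.range (n₁+1), ∑ k₂ ∈ Finset.range (n₂+1),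
          ENNReal.ofReal (bern n₁ k₁ x₁ * bern n₂ k₂ x₂) *
            choquet μ (fun ω => |F x₁ x₂ ω - F ((k₁:ℝ)/n₁) ((k₂:ℝ)/n₂) ω| ^ p) Set.univ := by
  have hμ : Monotone μ := fun A B => hmono A B
  set S := Finset.range (n₁ + 1) ×ˢ Finset.range (n₂ + 1)
  set w : ℕ × ℕ → ℝ := fun k => bern n₁ k.1 x₁ * bern n₂ k.2 x₂
  have hw : ∀ k ∈ S, 0 ≤ w k := fun k _ => mul_nonneg (bern_nonneg _ _ hx₁) (bern_nonneg _ _ hx₂)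
  have hw1 : ∑ k ∈ S, w k = 1 := by
    simp only [S, w, Finset.sum_product, ← Finset.sum_mul_sum, sum_bern_eq_one, one_mul]
  calc _ ≤ choquet μ (fun ω => ∑ k ∈ S, w k * |F x₁ x₂ ω - F (k.1 / n₁) (k.2 / n₂) ω| ^ p) univ :=
        choquet_mono hμ (fun ω => by
          simpa only [S, w, Finset.sum_product] using abs_sub_sum_mul_rpow_le S hw hw1 (F x₁ x₂ ω)
            (fun k => F (k.1 / n₁) (k.2 / n₂) ω) hp) univ
    _ ≤ ∑ k ∈ S, ENNReal.ofReal (w k) *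
          choquet μ (fun ω => |F x₁ x₂ ω - F (k.1 / n₁) (k.2 / n₂) ω| ^ p) univ :=
        choquet_sum_mul_le h0 hμ hsubmod S hw fun _ _ _ => by positivity
    _ = _ := Finset.sum_product ..

/-- Pointwise Jensen-type estimate for bivariate random Bernstein polynomials
with respect to a submodular capacity. -/
theorem choquet_bernstein_pointwise_estimate
    {Ω : Type*} [MeasurableSpace Ω] (μ : Set Ω → ℝ)
    (h0 : μ ∅ = 0) (h1 : μ Set.univ = 1)
    (hmono : ∀ A B : Set Ω, A ⊆ B → μ A ≤ μ B)
    (hsubmod : ∀ A B : Set Ω, μ (A ∪ B) + μ (A ∩ B) ≤ μ A + μ B)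
    (p : ℝ) (hp : 1 ≤ p) (F : ℝ → ℝ → Ω → ℝ) (hF : ∀ x y, Measurable (F x y))
    (n₁ n₂ : ℕ) (hn₁ : 1 ≤ n₁) (hn₂ : 1 ≤ n₂)
    (x₁ x₂ : ℝ) (hx₁ : x₁ ∈ Set.Icc (0:ℝ) 1) (hx₂ : x₂ ∈ Set.Icc (0:ℝ) 1) :
    choquet μ (fun ω => |F x₁ x₂ ω -
        ∑ k₁ ∈ Finset.range (n₁+1), ∑ k₂ ∈ Finset.range (n₂+1),
          bern n₁ k₁ x₁ * bern n₂ k₂ x₂ * F ((k₁:ℝ)/n₁) ((k₂:ℝ)/n₂) ω| ^ p) Set.univ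
      ≤ ∑ k₁ ∈ Finset.range (n₁+1), ∑ k₂ ∈ Finset.range (n₂+1),
          ENNReal.ofReal (bern n₁ k₁ x₁ * bern n₂ k₂ x₂) *
            choquet μ (fun ω => |F x₁ x₂ ω - F ((k₁:ℝ)/n₁) ((k₂:ℝ)/n₂) ω| ^ p) Set.univ :=
  choquet_bernstein_pointwise_estimate_general μ h0 hmono hsubmod p hp F n₁ n₂ x₁ x₂ hx₁ hx₂
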